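/- arXiv:1202.3077 — 2 statements merged into one kernel-verified Lean document; each statement's English description precedes it below -/
import Mathlib

section
/- The imaginary part of Tr(e^{i(λ+tν)} · e^{i(λ+sξ)}) has vanishing mixed second partial derivative ∂²/∂t∂s at (t,s)=(0,0), for any anti-Hermitian N×N matrices λ, ν, ξ. -/
open Matrix

/-! For skew-Hermitian `A` the matrix `e^{iA}` is Hermitian, and the trace of a product of two
Hermitian matrices is real. So the function being differentiated is identically zero. -/

theorem Matrix.IsHermitian.isSelfAdjoint_trace_mul {n R : Type*} [Fintype n] [CommRing R]
    [StarRing R] {A B : Matrix n n R} (hA : A.IsHermitian) (hB : B.IsHermitian) :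
    IsSelfAdjoint (A * B).trace := by
  rw [IsSelfAdjoint, ← trace_conjTranspose, conjTranspose_mul, hA.eq, hB.eq, trace_mul_comm]

theorem Matrix.im_trace_exp_I_smul_mul_exp_I_smul {n : Type*} [Fintype n] [DecidableEq n]
    {A B : Matrix n n ℂ} (hA : A ∈ skewAdjoint _) (hB : B ∈ skewAdjoint _) :
    (NormedSpace.exp (Complex.I • A) * NormedSpace.exp (Complex.I • B)).trace.im = 0 := by
  have hexp {C : Matrix n n ℂ} (hC : C ∈ skewAdjoint _) :
      (NormedSpace.exp (Complex.I • C)).IsHermitian :=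
    (IsSelfAdjoint.I_smul_of_mem_skewAdjoint hC).isHermitian.exp
  exact Complex.conj_eq_iff_im.mp ((hexp hA).isSelfAdjoint_trace_mul (hexp hB))

/-- The imaginary part of `Tr(e^{i(λ+tν)} e^{i(λ+sξ)})` has vanishing mixed second
partial derivative `∂²/∂t∂s` at `(0,0)`, for anti-Hermitian matrices `λ, ν, ξ`. -/
theorem stmt_1 {N : ℕ} (l ν ξ : Matrix (Fin N) (Fin N) ℂ)
    (hl : lᴴ = -l) (hν : νᴴ = -ν) (hξ : ξᴴ = -ξ) :
    deriv (fun t : ℝ => deriv (fun s : ℝ =>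
      ((NormedSpace.exp (Complex.I • (l + t • ν)) *
        NormedSpace.exp (Complex.I • (l + s • ξ))).trace).im) 0) 0 = 0 := by
  have hskew {μ : Matrix (Fin N) (Fin N) ℂ} (hμ : μᴴ = -μ) (t : ℝ) :
      l + t • μ ∈ skewAdjoint _ :=
    add_mem (skewAdjoint.mem_iff.mpr hl) (skewAdjoint.smul_mem t (skewAdjoint.mem_iff.mpr hμ))
  simp only [im_trace_exp_I_smul_mul_exp_I_smul (hskew hν _) (hskew hξ _), deriv_const]
end

section
/- The function f : SL(2,ℂ) → ℝ given by f(A) = √(-det(A*A - (1/2)Tr(A*A)·I)) is well-defined (the expression under the square root is nonnegative), continuous, invariant under left and right multiplication by SU(2), but is not smooth at A = identity. -/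
open Matrix
attribute [local instance] Matrix.frobeniusNormedAddCommGroup Matrix.frobeniusNormedSpace

/-- The traceless Hermitian part `AᴴA - ½Tr(AᴴA)·I` of `AᴴA`. -/
noncomputable def tracelessPart (A : Matrix (Fin 2) (Fin 2) ℂ) : Matrix (Fin 2) (Fin 2) ℂ :=
  Aᴴ * A - ((Aᴴ * A).trace / 2) • (1 : Matrix (Fin 2) (Fin 2) ℂ)

/-- `F(A) = √(-det(AᴴA - ½Tr(AᴴA)·I))`, the absolute value of the eigenvalue of the
traceless Hermitian part of `AᴴA`. -/
noncomputable def cutFn (A : Matrix (Fin 2) (Fin 2) ℂ) : ℝ :=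
  Real.sqrt (-((tracelessPart A).det).re)

lemma det_tracelessPart (A : Matrix (Fin 2) (Fin 2) ℂ) :
    (tracelessPart A).det =
      Complex.ofReal (-(((Complex.normSq (A 0 0) + Complex.normSq (A 1 0) - Complex.normSq (A 0 1)
        - Complex.normSq (A 1 1)) / 2) ^ 2)
        - Complex.normSq ((starRingEnd ℂ) (A 0 0) * A 0 1 + (starRingEnd ℂ) (A 1 0) * A 1 1)) := by
  simp only [tracelessPart, Matrix.det_fin_two, Matrix.trace_fin_two, Matrix.sub_apply,
    Matrix.smul_apply, Matrix.one_apply, Matrix.mul_apply, Fin.sum_univ_two,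
    Matrix.conjTranspose_apply]
  simp only [Complex.ext_iff, Complex.normSq_apply, Complex.add_re, Complex.add_im,
    Complex.sub_re, Complex.sub_im, Complex.mul_re, Complex.mul_im, Complex.ofReal_re,
    Complex.ofReal_im, Complex.div_re, Complex.div_im, Complex.smul_re, Complex.smul_im,
    Complex.conj_re, Complex.conj_im, Complex.normSq_apply, Complex.neg_re, Complex.neg_im,
    Complex.one_re, Complex.one_im, Complex.zero_re, Complex.zero_im]
  norm_num
  constructor <;> ring

lemma continuous_cutFn : Continuous cutFn := by
  unfold cutFn tracelessPart
  have h1 : Continuous fun A : Matrix (Fin 2) (Fin 2) ℂ => Aᴴ * A :=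
    (continuous_id.matrix_conjTranspose).matrix_mul continuous_id
  exact Real.continuous_sqrt.comp <| (Complex.continuous_re.comp
    ((h1.sub (((h1.matrix_trace.div_const 2)).smul continuous_const)).matrix_det)).neg

lemma tracelessPart_left_inv (u A : Matrix (Fin 2) (Fin 2) ℂ) (hu : uᴴ * u = 1) :
    tracelessPart (u * A) = tracelessPart A := by
  simp only [tracelessPart, conjTranspose_mul]
  rw [show Aᴴ * uᴴ * (u * A) = Aᴴ * (uᴴ * u) * A by noncomm_ring, hu, mul_one]

lemma tracelessPart_right_inv (u A : Matrix (Fin 2) (Fin 2) ℂ) (hu : u * uᴴ = 1)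
    (hu' : uᴴ * u = 1) :
    (tracelessPart (A * u)).det = (tracelessPart A).det := by
  have h1 : tracelessPart (A * u) = uᴴ * tracelessPart A * u := by
    simp only [tracelessPart, conjTranspose_mul]
    have ht : (uᴴ * Aᴴ * (A * u)).trace = (Aᴴ * A).trace := by
      rw [show uᴴ * Aᴴ * (A * u) = uᴴ * (Aᴴ * A * u) by noncomm_ring, Matrix.trace_mul_comm,
        show Aᴴ * A * u * uᴴ = Aᴴ * A * (u * uᴴ) by noncomm_ring, hu, mul_one]
    rw [ht]
    rw [Matrix.mul_sub, Matrix.sub_mul]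
    congr 1
    · noncomm_ring
    · rw [Matrix.mul_smul, Matrix.smul_mul, mul_one, hu']
  rw [h1, Matrix.det_mul, Matrix.det_mul, mul_comm, ← mul_assoc, ← Matrix.det_mul, hu, det_one,
    one_mul]

noncomputable def curveM (t : ℝ) : Matrix (Fin 2) (Fin 2) ℂ :=
  ((Real.exp t : ℝ) : ℂ) • !![(1:ℂ),0;0,0] + ((Real.exp (-t) : ℝ) : ℂ) • !![(0:ℂ),0;0,1]

lemma curveM_apply (t : ℝ) :
    curveM t = !![((Real.exp t : ℝ) : ℂ), 0; 0, ((Real.exp (-t) : ℝ) : ℂ)] := by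
  ext i j
  fin_cases i <;> fin_cases j <;> simp [curveM]

lemma curveM_zero : curveM 0 = 1 := by
  rw [curveM_apply]
  norm_num
  ext i j
  fin_cases i <;> fin_cases j <;> simp

lemma curveM_det (t : ℝ) : (curveM t).det = 1 := by
  rw [curveM_apply, Matrix.det_fin_two_of]
  rw [mul_zero, sub_zero, ← Complex.ofReal_mul, ← Real.exp_add]
  simp

lemma curveM_contDiff : ContDiff ℝ (⊤ : ℕ∞) curveM := by
  unfold curveM
  apply ContDiff.add
  · exact ((ContinuousLinearMap.toSpanSingleton ℂ
      (!![(1:ℂ),0;0,0] : Matrix (Fin 2) (Fin 2) ℂ)).restrictScalars ℝ).contDiff.comp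
      (Complex.ofRealCLM.contDiff.comp Real.contDiff_exp)
  · exact ((ContinuousLinearMap.toSpanSingleton ℂ
      (!![(0:ℂ),0;0,1] : Matrix (Fin 2) (Fin 2) ℂ)).restrictScalars ℝ).contDiff.comp
      (Complex.ofRealCLM.contDiff.comp (Real.contDiff_exp.comp contDiff_neg))

lemma cutFn_curveM (t : ℝ) : cutFn (curveM t) = |Real.sinh (2 * t)| := by
  rw [cutFn, det_tracelessPart, curveM_apply]
  have h : ∀ x : ℝ, Complex.normSq ((x : ℝ) : ℂ) = x ^ 2 := by
    intro x; simp [Complex.normSq_apply]; ring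
  norm_num [h]
  have e1 : Complex.normSq (Complex.exp (t : ℂ)) = Real.exp t ^ 2 := by
    rw [← Complex.ofReal_exp, h]
  have e2 : Complex.normSq (Complex.exp (-(t : ℂ))) = Real.exp (-t) ^ 2 := by
    rw [show (-(t:ℂ)) = ((-t : ℝ) : ℂ) by push_cast; ring, ← Complex.ofReal_exp, h]
  rw [e1, e2]
  have e3 : ((((Real.exp t ^ 2 : ℝ) : ℂ) - ((Real.exp (-t) ^ 2 : ℝ) : ℂ)) / 2) ^ 2
      = (((Real.exp t ^ 2 - Real.exp (-t) ^ 2) / 2) ^ 2 : ℝ) := by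
    push_cast; ring
  rw [e3, Complex.ofReal_re]
  have h2 : (Real.exp t ^ 2 - Real.exp (-t) ^ 2) / 2 = Real.sinh (2 * t) := by
    rw [Real.sinh_eq, show (2:ℝ) * t = t + t by ring]
    rw [Real.exp_add, neg_add, Real.exp_add]
    ring
  rw [h2]
  exact Real.sqrt_sq_eq_abs _

lemma not_smooth : ¬ ∃ g : Matrix (Fin 2) (Fin 2) ℂ → ℝ, ContDiffAt ℝ (⊤ : ℕ∞) g 1 ∧
    ∀ᶠ A in nhdsWithin (1 : Matrix (Fin 2) (Fin 2) ℂ)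
      {A : Matrix (Fin 2) (Fin 2) ℂ | A.det = 1}, g A = cutFn A := by
  rintro ⟨g, hg, hev⟩
  have hM : ContDiffAt ℝ (⊤ : ℕ∞) curveM 0 := curveM_contDiff.contDiffAt
  have hgc : ContDiffAt ℝ (⊤ : ℕ∞) (fun t => g (curveM t)) 0 := by
    have hg' := hg
    rw [← curveM_zero] at hg'
    exact hg'.comp 0 hM
  obtain ⟨c, hc⟩ : ∃ c, HasDerivAt (fun t => g (curveM t)) c 0 :=
    ⟨_, (hgc.differentiableAt (by simp)).hasDerivAt⟩
  have htend : Filter.Tendsto curveM (nhds 0)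
      (nhdsWithin 1 {A : Matrix (Fin 2) (Fin 2) ℂ | A.det = 1}) := by
    apply tendsto_nhdsWithin_of_tendsto_nhds_of_eventually_within
    · have := hM.continuousAt.tendsto
      rwa [curveM_zero] at this
    · exact Filter.Eventually.of_forall fun t => curveM_det t
  have hev2 : (fun t => g (curveM t)) =ᶠ[nhds 0] fun t => |Real.sinh (2 * t)| := by
    filter_upwards [htend.eventually hev] with t ht
    rw [ht, cutFn_curveM]
  have hc2 : HasDerivAt (fun t : ℝ => |Real.sinh (2 * t)|) c 0 :=
    hc.congr_of_eventuallyEq hev2.symm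
  have hs : HasDerivAt (fun t : ℝ => Real.sinh (2 * t)) 2 0 := by
    have h1 : HasDerivAt (fun t : ℝ => 2 * t) 2 0 := by
      simpa using (hasDerivAt_id (0 : ℝ)).const_mul 2
    have h2 := (Real.hasDerivAt_sinh (2 * 0)).comp 0 h1
    norm_num at h2
    exact h2
  have tslope := hasDerivAt_iff_tendsto_slope.mp hc2
  have key : ∀ (d : ℝ) (s : Set ℝ), s ⊆ {(0:ℝ)}ᶜ →
      (∀ t ∈ s, |Real.sinh (2 * t)| = d * Real.sinh (2 * t)) →
      Filter.Tendsto (slope (fun t : ℝ => |Real.sinh (2 * t)|) 0) (nhdsWithin 0 s)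
        (nhds (d * 2)) := by
    intro d s hs0 habs
    have t1 : Filter.Tendsto (slope (fun t : ℝ => d * Real.sinh (2 * t)) 0) (nhdsWithin 0 s)
        (nhds (d * 2)) := by
      have := hasDerivAt_iff_tendsto_slope.mp (hs.const_mul d)
      exact this.mono_left (nhdsWithin_mono _ hs0)
    apply t1.congr'
    filter_upwards [self_mem_nhdsWithin] with t ht
    rw [slope_def_field, slope_def_field, habs t ht]
    norm_num
  have cright : Filter.Tendsto (slope (fun t : ℝ => |Real.sinh (2 * t)|) 0)
      (nhdsWithin 0 (Set.Ioi 0)) (nhds c) :=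
    tslope.mono_left (nhdsWithin_mono _ fun x hx => ne_of_gt hx)
  have cleft : Filter.Tendsto (slope (fun t : ℝ => |Real.sinh (2 * t)|) 0)
      (nhdsWithin 0 (Set.Iio 0)) (nhds c) :=
    tslope.mono_left (nhdsWithin_mono _ fun x hx => ne_of_lt hx)
  have e2 : c = 1 * 2 := by
    refine tendsto_nhds_unique cright (key 1 _ (fun x hx => ne_of_gt hx) ?_)
    intro t ht
    rw [one_mul, abs_of_nonneg (Real.sinh_nonneg_iff.mpr
      (by have := Set.mem_Ioi.mp ht; linarith))]
  have em2 : c = (-1) * 2 := by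
    refine tendsto_nhds_unique cleft (key (-1) _ (fun x hx => ne_of_lt hx) ?_)
    intro t ht
    have ht' : Real.sinh (2 * t) ≤ 0 := by
      rw [Real.sinh_nonpos_iff]
      simp at ht ⊢
      linarith
    rw [abs_of_nonpos ht']
    ring
  rw [e2] at em2
  norm_num at em2

/-- The function `f : SL(2,ℂ) → ℝ`, `f(A) = √(-det(AᴴA - ½Tr(AᴴA) I))`, is well defined
(the quantity under the root is a nonnegative real number), continuous, invariant under
left and right multiplication by `SU(2)`, but not smooth at the identity of `SL(2,ℂ)`
(it admits no smooth local extension to the matrix space agreeing with it on `SL(2,ℂ)`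
near the identity). -/
theorem stmt_8 :
    (∀ A : Matrix.SpecialLinearGroup (Fin 2) ℂ,
      ((tracelessPart (A : Matrix (Fin 2) (Fin 2) ℂ)).det).im = 0 ∧
      ((tracelessPart (A : Matrix (Fin 2) (Fin 2) ℂ)).det).re ≤ 0) ∧
    Continuous (fun A : {A : Matrix (Fin 2) (Fin 2) ℂ // A.det = 1} =>
      cutFn (A : Matrix (Fin 2) (Fin 2) ℂ)) ∧
    (∀ u ∈ Matrix.specialUnitaryGroup (Fin 2) ℂ, ∀ A : Matrix (Fin 2) (Fin 2) ℂ,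
      cutFn (u * A) = cutFn A ∧ cutFn (A * u) = cutFn A) ∧
    ¬ ∃ g : Matrix (Fin 2) (Fin 2) ℂ → ℝ, ContDiffAt ℝ (⊤ : ℕ∞) g 1 ∧
      ∀ᶠ A in nhdsWithin (1 : Matrix (Fin 2) (Fin 2) ℂ)
        {A : Matrix (Fin 2) (Fin 2) ℂ | A.det = 1}, g A = cutFn A := by
  refine ⟨?_, ?_, ?_, not_smooth⟩
  · intro A
    rw [det_tracelessPart]
    constructor
    · exact Complex.ofReal_im _
    · rw [Complex.ofReal_re]
      have h1 := sq_nonneg ((Complex.normSq ((A : Matrix (Fin 2) (Fin 2) ℂ) 0 0)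
        + Complex.normSq ((A : Matrix (Fin 2) (Fin 2) ℂ) 1 0)
        - Complex.normSq ((A : Matrix (Fin 2) (Fin 2) ℂ) 0 1)
        - Complex.normSq ((A : Matrix (Fin 2) (Fin 2) ℂ) 1 1)) / 2)
      have h2 := Complex.normSq_nonneg ((starRingEnd ℂ) ((A : Matrix (Fin 2) (Fin 2) ℂ) 0 0)
        * (A : Matrix (Fin 2) (Fin 2) ℂ) 0 1
        + (starRingEnd ℂ) ((A : Matrix (Fin 2) (Fin 2) ℂ) 1 0)
        * (A : Matrix (Fin 2) (Fin 2) ℂ) 1 1)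
      linarith
  · exact continuous_cutFn.comp continuous_subtype_val
  · intro u hu A
    rw [Matrix.mem_specialUnitaryGroup_iff] at hu
    have h1 : u * uᴴ = 1 := by
      have := Matrix.mem_unitaryGroup_iff.mp hu.1
      rwa [Matrix.star_eq_conjTranspose] at this
    have h2 : uᴴ * u = 1 := by
      have := Matrix.mem_unitaryGroup_iff'.mp hu.1
      rwa [Matrix.star_eq_conjTranspose] at this
    constructor
    · unfold cutFn
      rw [tracelessPart_left_inv u A h2]
    · unfold cutFn
      rw [tracelessPart_right_inv u A h1 h2]
end
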